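/- Let W ⊆ ℝ^n be a linear subspace and c, d, d̃ ∈ ℝ^n. Suppose (x̃, s) is an optimal solution to Primal-Dual(W, d̃, c), and suppose the primal program of Primal-Dual(W,d,c) is feasible. Let τ ≥ (κ_W + 1)‖d − d̃‖₁ and T ≥ (2nκ_W + 1)τ, and partition {1,…,n} as I_L = {i : x̃_i > T}, I_M = {i : T ≥ x̃_i > τ}, I_S = {i : τ ≥ x̃_i}, and further partition I_S as I_S⁰ = I_S ∩ cl(I_L) and I_S⁺ = I_S ∖ cl(I_L). Then there exists a primal optimal solution x'' to Primal-Dual(W,d,c) (a minimizer of ⟨c,x⟩ over {x ∈ W + d : x ≥ 0}) such that x''_i > 0 for every i ∈ I_L ∪ I_M and x''_i = 0 for every i ∈ I_S⁰. -/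

import Mathlib

open scoped BigOperators

variable {ι : Type*} [Fintype ι] [DecidableEq ι]

/-- The ℓ₁ norm of a vector. -/
noncomputable def norm1 (x : ι → ℝ) : ℝ := ∑ i, |x i|

/-- The ℓ∞ norm of a vector. -/
noncomputable def normInf (x : ι → ℝ) : ℝ := ⨆ i, |x i|

/-- The ℓ₂ norm of a vector. -/
noncomputable def norm2 (x : ι → ℝ) : ℝ := Real.sqrt (∑ i, (x i) ^ 2)

/-- The componentwise negative part `max (-x) 0`. -/
noncomputable def vneg (x : ι → ℝ) : ι → ℝ := fun i => max (-(x i)) 0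

/-- The componentwise positive part `max x 0`. -/
noncomputable def vpos (x : ι → ℝ) : ι → ℝ := fun i => max (x i) 0

/-- `y` is sign-consistent with `x`. -/
def SignConsistent (y x : ι → ℝ) : Prop :=
  (∀ i, 0 ≤ x i * y i) ∧ ∀ i, x i = 0 → y i = 0

/-- The subspace `ℝ^n_C` of vectors supported on `C`. -/
def coordSubspace (C : Set ι) : Submodule ℝ (ι → ℝ) where
  carrier := {x | ∀ i ∉ C, x i = 0}
  zero_mem' := by intro i _; rfl
  add_mem' := by intro a b ha hb i hi; simp [ha i hi, hb i hi]
  smul_mem' := by intro c a ha i hi; simp [ha i hi]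

/-- `C` is a circuit of the subspace `W`: `W ∩ ℝ^n_C` is one-dimensional and no
strict subset of `C` has this property. -/
def IsCircuit (W : Submodule ℝ (ι → ℝ)) (C : Set ι) : Prop :=
  Module.finrank ℝ ↥(W ⊓ coordSubspace C) = 1 ∧
  ∀ C' : Set ι, C' ⊂ C → Module.finrank ℝ ↥(W ⊓ coordSubspace C') ≠ 1

/-- The circuit imbalance measure `κ_W`. -/
noncomputable def kappa (W : Submodule ℝ (ι → ℝ)) : ℝ :=
  sSup ({1} ∪ {r | ∃ C : Set ι, IsCircuit W C ∧ ∃ g ∈ W, g ≠ 0 ∧ {i | g i ≠ 0} = C ∧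
    r = sSup ((fun i => |g i|) '' C) / sInf ((fun i => |g i|) '' C)})

/-- The matroidal closure of `K` with respect to `W`. -/
def clos (W : Submodule ℝ (ι → ℝ)) (K : Set ι) : Set ι :=
  K ∪ {j | j ∉ K ∧ ∃ C : Set ι, IsCircuit W C ∧ j ∈ C ∧ C ⊆ K ∪ {j}}

/-- `z` is the minimum-norm lift `L_I^W(p)` of `p` to `W`:
`z ∈ W`, `z` agrees with `p` on `I`, and `z` has minimum ℓ₂-norm among such vectors. -/
def IsMinLift (W : Submodule ℝ (ι → ℝ)) (I : Finset ι) (p z : ι → ℝ) : Prop :=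
  z ∈ W ∧ (∀ i ∈ I, z i = p i) ∧
  ∀ z' ∈ W, (∀ i ∈ I, z' i = p i) → norm2 z ≤ norm2 z'

/-- The ℓ₂→ℓ₂ operator norm of the lifting map `L_I^W` on `π_I(W)`. -/
noncomputable def liftOpNorm (W : Submodule ℝ (ι → ℝ)) (I : Finset ι) : ℝ :=
  sSup {r | ∃ p z, IsMinLift W I p z ∧ r = norm2 z / Real.sqrt (∑ i ∈ I, (p i) ^ 2)}

/-- The condition number `χ̄_W = max{‖L_I^W‖ : ∅ ≠ I}`. -/
noncomputable def chiBar (W : Submodule ℝ (ι → ℝ)) : ℝ :=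
  sSup {r | ∃ I : Finset ι, I.Nonempty ∧ r = liftOpNorm W I}

/-- The orthogonal complement of `W` in `ℝ^n`. -/
def orthComp (W : Submodule ℝ (ι → ℝ)) : Submodule ℝ (ι → ℝ) where
  carrier := {y | ∀ x ∈ W, ∑ i, x i * y i = 0}
  zero_mem' := by intro x hx; simp
  add_mem' := by
    intro a b ha hb x hx
    simpa [mul_add, Finset.sum_add_distrib, ha x hx] using hb x hx
  smul_mem' := by
    intro c a ha x hx
    have h := ha x hx
    have : ∑ i, x i * (c • a) i = c * ∑ i, x i * a i := by
      rw [Finset.mul_sum]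
      refine Finset.sum_congr rfl fun i _ => ?_
      simp [Pi.smul_apply, smul_eq_mul]; ring
    simpa [this, h]

/-- `x` is a feasible solution to the primal program of Primal-Dual(W,d,c). -/
def PrimalFeasible (W : Submodule ℝ (ι → ℝ)) (d x : ι → ℝ) : Prop :=
  x - d ∈ W ∧ ∀ i, 0 ≤ x i

/-- `s` is a feasible solution to the dual program of Primal-Dual(W,d,c). -/
def DualFeasible (W : Submodule ℝ (ι → ℝ)) (c s : ι → ℝ) : Prop :=
  s - c ∈ orthComp W ∧ ∀ i, 0 ≤ s i

/-- `(x,s)` is an optimal solution to Primal-Dual(W,d,c): both feasible and `⟨x,s⟩ = 0`. -/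
def IsOptimalPair (W : Submodule ℝ (ι → ℝ)) (d c x s : ι → ℝ) : Prop :=
  PrimalFeasible W d x ∧ DualFeasible W c s ∧ ∑ i, x i * s i = 0

/-- The ℓ₂→ℓ₂ operator norm of a matrix. -/
noncomputable def l2OpNorm {m n : Type*} [Fintype m] [Fintype n] [DecidableEq n]
    (A : Matrix m n ℝ) : ℝ :=
  ‖LinearMap.toContinuousLinearMap (Matrix.toEuclideanLin A)‖

/-- The max-norm (largest absolute value of an entry) of a matrix. -/
noncomputable def matMaxNorm {m n : Type*} [Fintype m] [Fintype n] (A : Matrix m n ℝ) : ℝ :=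
  ⨆ i, ⨆ j, |A i j|

/-!
Two steps. First, proximity: among the optimal solutions for `d`, take `x` closest in `ℓ₁` to
`x̃ + (d - d̃)` and decompose `x - x̃ - (d - d̃) ∈ W` conformally into circuit vectors. Each of
them meets a coordinate where this displacement is at most `|d - d̃|`: one that decreases the
cost is negative where `s > 0`, hence where `x̃ = 0` by complementary slackness; any other one is
positive where `x = 0`, since otherwise subtracting a small multiple of it would keep `x` optimal
and bring it closer. Charging every circuit vector to such a coordinate and using the circuit
imbalance gives `‖x - x̃‖∞ ≤ (κ_W + 1) ‖d - d̃‖₁ ≤ τ`. (The same charging argument, with budget a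
feasible point, shows that an optimum exists.)

Second, each `i ∈ I_S⁰` lies on a circuit inside `I_L ∪ {i}`, which yields a vector of `W` equal
to `1` at `i`, supported on `I_L ∪ {i}`, with entries at most `κ_W`. Subtracting `x_i` times
these vectors zeroes `x` on `I_S⁰` without increasing the cost (the dual slack `s` vanishes on
`I_L`), and moves the coordinates in `I_L`, which exceed `T - τ`, by at most `2nκ_W τ`.
-/

section

open Finset Function Filter Topology
open scoped Pointwise

variable {α : Type*} {W : Submodule ℝ (α → ℝ)}

theorem SignConsistent.refl (x : α → ℝ) : SignConsistent x x :=
  ⟨fun i => mul_self_nonneg (x i), fun _ h => h⟩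

theorem SignConsistent.nonneg {x y : α → ℝ} (h : SignConsistent y x) {i : α} (hi : 0 ≤ x i) :
    0 ≤ y i := by
  rcases hi.eq_or_lt with hi | hi
  · exact (h.2 i hi.symm).ge
  · exact nonneg_of_mul_nonneg_right (h.1 i) hi

theorem SignConsistent.nonpos {x y : α → ℝ} (h : SignConsistent y x) {i : α} (hi : x i ≤ 0) :
    y i ≤ 0 := by
  rcases hi.eq_or_lt with hi | hi
  · exact (h.2 i hi).le
  · exact nonpos_of_mul_nonneg_right (h.1 i) hi

theorem SignConsistent.mul_pos {x y : α → ℝ} (h : SignConsistent y x) {i : α} (hi : y i ≠ 0) :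
    0 < x i * y i :=
  (h.1 i).lt_of_ne' (mul_ne_zero (fun hx => hi (h.2 i hx)) hi)

theorem SignConsistent.trans {x y z : α → ℝ} (hyx : SignConsistent y x)
    (hzy : SignConsistent z y) : SignConsistent z x := by
  refine ⟨fun i => ?_, fun i hi => hzy.2 i (hyx.2 i hi)⟩
  rcases le_total 0 (x i) with hi | hi
  · exact mul_nonneg hi (hzy.nonneg (hyx.nonneg hi))
  · exact mul_nonneg_of_nonpos_of_nonpos hi (hzy.nonpos (hyx.nonpos hi))

theorem SignConsistent.smul {x y : α → ℝ} (h : SignConsistent y x) {a : ℝ} (ha : 0 ≤ a) :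
    SignConsistent (a • y) x :=
  ⟨fun i => by simpa [mul_left_comm] using mul_nonneg ha (h.1 i), fun i hi => by simp [h.2 i hi]⟩

theorem SignConsistent.support_subset {x y : α → ℝ} (h : SignConsistent y x) :
    support y ⊆ support x :=
  fun i hy hx => hy (h.2 i hx)

theorem mem_coordSubspace_iff {C : Set α} {x : α → ℝ} :
    x ∈ coordSubspace C ↔ support x ⊆ C :=
  support_subset_iff'.symm

theorem exists_ne_zero_of_finrank_eq_one {C : Set α}
    (h : Module.finrank ℝ ↥(W ⊓ coordSubspace C) = 1) :
    ∃ u ∈ W, u ≠ 0 ∧ support u ⊆ C := by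
  have := Module.nontrivial_of_finrank_eq_succ h
  obtain ⟨⟨u, huW, huC⟩, hu0⟩ := exists_ne (0 : ↥(W ⊓ coordSubspace C))
  exact ⟨u, huW, fun h => hu0 (Subtype.ext h), mem_coordSubspace_iff.1 huC⟩

theorem IsCircuit.eq_smul {C : Set α} (hC : IsCircuit W C)
    {g g' : α → ℝ} (hg : g ∈ W) (hgC : support g ⊆ C) (hg' : g' ∈ W) (hg'C : support g' ⊆ C)
    (hg'0 : g' ≠ 0) : ∃ a : ℝ, g = a • g' := by
  obtain ⟨a, ha⟩ := (finrank_eq_one_iff_of_nonzero' (⟨g', hg', mem_coordSubspace_iff.2 hg'C⟩ :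
    ↥(W ⊓ coordSubspace C)) fun h => hg'0 (congrArg Subtype.val h)).1 hC.1
      ⟨g, hg, mem_coordSubspace_iff.2 hgC⟩
  exact ⟨a, (congrArg Subtype.val ha).symm⟩

theorem isCircuit_support {v : α → ℝ} (hv : v ∈ W) (hv0 : v ≠ 0)
    (hmul : ∀ u ∈ W, support u ⊆ support v → ∃ a : ℝ, u = a • v) : IsCircuit W (support v) := by
  refine ⟨(finrank_eq_one_iff_of_nonzero' (⟨v, hv, mem_coordSubspace_iff.2 subset_rfl⟩ :
    ↥(W ⊓ coordSubspace (support v))) fun h => hv0 (congrArg Subtype.val h)).2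
      fun ⟨u, huW, huC⟩ => ?_, fun C' hC' hfin => ?_⟩
  · obtain ⟨a, rfl⟩ := hmul u huW (mem_coordSubspace_iff.1 huC)
    exact ⟨a, rfl⟩
  · obtain ⟨u, huW, hu0, huC'⟩ := exists_ne_zero_of_finrank_eq_one hfin
    obtain ⟨a, rfl⟩ := hmul u huW (huC'.trans hC'.subset)
    obtain ⟨i, hvi, hiC'⟩ := Set.exists_of_ssubset hC'
    have ha : a = 0 := by
      by_contra ha
      exact hiC' (huC' (by simpa [ha] using hvi))
    exact hu0 (by simp [ha])

theorem IsCircuit.exists_support_eq {C : Set α} (hC : IsCircuit W C) :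
    ∃ g ∈ W, support g = C := by
  obtain ⟨u, huW, hu0, huC⟩ := exists_ne_zero_of_finrank_eq_one hC.1
  have heq : W ⊓ coordSubspace (support u) = W ⊓ coordSubspace C := by
    refine le_antisymm (inf_le_inf_left _ fun g hg => ?_) fun g ⟨hg, hgC⟩ => ?_
    · exact mem_coordSubspace_iff.2 ((mem_coordSubspace_iff.1 hg).trans huC)
    · obtain ⟨a, rfl⟩ := hC.eq_smul hg (mem_coordSubspace_iff.1 hgC) huW huC hu0
      exact ⟨hg, mem_coordSubspace_iff.2 (support_const_smul_subset a u)⟩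
  refine ⟨u, huW, not_ne_iff.1 fun hne => hC.2 _ (huC.ssubset_of_ne hne) ?_⟩
  rw [heq]
  exact hC.1

structure IsConformalDecomposition (W : Submodule ℝ (α → ℝ)) (z : α → ℝ) {k : ℕ}
    (h : Fin k → α → ℝ) : Prop where
  sum_eq : ∑ j, h j = z
  mem : ∀ j, h j ∈ W
  ne_zero : ∀ j, h j ≠ 0
  signConsistent : ∀ j, SignConsistent (h j) z
  isCircuit : ∀ j, IsCircuit W (support (h j))

theorem IsConformalDecomposition.cons {z v : α → ℝ} {k : ℕ} {h : Fin k → α → ℝ}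
    (hd : IsConformalDecomposition W (z - v) h) (hv : v ∈ W) (hv0 : v ≠ 0)
    (hvz : SignConsistent v z) (hvC : IsCircuit W (support v))
    (hzv : SignConsistent (z - v) z) : IsConformalDecomposition W z (Fin.cons v h) where
  sum_eq := by rw [Fin.sum_cons, hd.sum_eq, add_sub_cancel]
  mem := Fin.cases hv hd.mem
  ne_zero := Fin.cases hv0 hd.ne_zero
  signConsistent := Fin.cases hvz fun j => hzv.trans (hd.signConsistent j)
  isCircuit := Fin.cases hvC hd.isCircuit

theorem IsConformalDecomposition.sum_abs_le {z : α → ℝ} {k : ℕ} {h : Fin k → α → ℝ}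
    (hd : IsConformalDecomposition W z h) (J : Finset (Fin k)) (l : α) :
    ∑ j ∈ J, |h j l| ≤ |z l| := by
  have hz : ∑ j, h j l = z l := by rw [← hd.sum_eq, Finset.sum_apply]
  rcases le_total 0 (z l) with hl | hl
  · have hnn j : 0 ≤ h j l := (hd.signConsistent j).nonneg hl
    calc ∑ j ∈ J, |h j l| = ∑ j ∈ J, h j l := sum_congr rfl fun j _ => abs_of_nonneg (hnn j)
      _ ≤ ∑ j, h j l := sum_le_sum_of_subset_of_nonneg (subset_univ J) fun j _ _ => hnn j
      _ = |z l| := by rw [hz, abs_of_nonneg hl]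
  · have hnp j : h j l ≤ 0 := (hd.signConsistent j).nonpos hl
    calc ∑ j ∈ J, |h j l| = ∑ j ∈ J, -h j l := sum_congr rfl fun j _ => abs_of_nonpos (hnp j)
      _ ≤ ∑ j, -h j l :=
          sum_le_sum_of_subset_of_nonneg (subset_univ J) fun j _ _ => neg_nonneg.2 (hnp j)
      _ = |z l| := by rw [sum_neg_distrib, hz, abs_of_nonpos hl]

theorem sSup_div_sInf_image_abs_smul (g : α → ℝ) {a : ℝ} (ha : a ≠ 0) (C : Set α) :
    sSup ((fun i => |(a • g) i|) '' C) / sInf ((fun i => |(a • g) i|) '' C) =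
      sSup ((fun i => |g i|) '' C) / sInf ((fun i => |g i|) '' C) := by
  have himage : (fun i => |(a • g) i|) '' C = |a| • ((fun i => |g i|) '' C) := by
    rw [← Set.image_smul, Set.image_image]
    simp [abs_mul]
  rw [himage, Real.sSup_smul_of_nonneg (abs_nonneg a), Real.sInf_smul_of_nonneg (abs_nonneg a),
    smul_eq_mul, smul_eq_mul, mul_div_mul_left _ _ (abs_ne_zero.2 ha)]

theorem PrimalFeasible.sub_mem {d x y : α → ℝ}
    (hx : PrimalFeasible W d x) (hy : PrimalFeasible W d y) : x - y ∈ W := by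
  simpa using W.sub_mem hx.1 hy.1

theorem abs_sub_mul_le {u v t : ℝ} (huv : 0 ≤ u * v) (hvu : |v| ≤ |u|) (ht0 : 0 ≤ t)
    (ht1 : t ≤ 1) : |u - t * v| ≤ |u| - t * |v| := by
  rcases le_total 0 u with hu | hu
  · have hv : 0 ≤ v := by nlinarith [abs_le.1 (hvu.trans_eq (abs_of_nonneg hu))]
    rw [abs_of_nonneg hu, abs_of_nonneg hv] at *
    rw [abs_of_nonneg (by nlinarith)]
  · have hv : v ≤ 0 := by nlinarith [abs_le.1 (hvu.trans_eq (abs_of_nonpos hu))]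
    rw [abs_of_nonpos hu, abs_of_nonpos hv] at *
    rw [abs_of_nonpos (by nlinarith)]
    linarith

variable [Fintype α]

/-- `t` is the minimum of `v i / u i` over the coordinates where `u` and `v` agree in sign. -/
theorem exists_pos_signConsistent_sub_smul {u v : α → ℝ} (hsupp : support u ⊆ support v)
    (hex : ∃ i, 0 < u i * v i) :
    ∃ t : ℝ, 0 < t ∧ SignConsistent (v - t • u) v ∧ ∃ i, v i ≠ 0 ∧ (v - t • u) i = 0 := by
  classical
  obtain ⟨i₀, hi₀, hmin⟩ := (univ.filter fun i => 0 < u i * v i).exists_min_image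
    (fun i => v i / u i) (by simpa [Finset.Nonempty] using hex)
  simp only [mem_filter, mem_univ, true_and] at hi₀ hmin
  have hu₀ : u i₀ ≠ 0 := left_ne_zero_of_mul hi₀.ne'
  have ht : 0 < v i₀ / u i₀ := by
    rw [← mul_div_mul_left (v i₀) (u i₀) hu₀]
    exact div_pos hi₀ (mul_self_pos.2 hu₀)
  refine ⟨v i₀ / u i₀, ht, ⟨fun i => ?_, fun i hi => ?_⟩, i₀, right_ne_zero_of_mul hi₀.ne', ?_⟩
  · simp only [Pi.sub_apply, Pi.smul_apply, smul_eq_mul]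
    rcases le_or_gt (u i * v i) 0 with hi | hi
    · nlinarith [mul_self_nonneg (v i), mul_le_mul_of_nonneg_left hi ht.le]
    · have hvi : v i / u i * (u i * v i) = v i * v i := by
        field_simp [left_ne_zero_of_mul hi.ne']
      nlinarith [mul_le_mul_of_nonneg_right (hmin i hi) hi.le]
  · have : u i = 0 := not_ne_iff.1 fun hu => hsupp hu hi
    simp [hi, this]
  · simp [div_mul_cancel₀ _ hu₀]

theorem exists_signConsistent_isCircuit {w : α → ℝ} (hw : w ∈ W) (hw0 : w ≠ 0) :
    ∃ v ∈ W, v ≠ 0 ∧ SignConsistent v w ∧ IsCircuit W (support v) := by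
  obtain ⟨_, ⟨v, ⟨hv, hv0, hvw⟩, rfl⟩, hmin⟩ := wellFounded_lt.has_min
    (support '' {g | g ∈ W ∧ g ≠ 0 ∧ SignConsistent g w}) ⟨_, w, ⟨hw, hw0, .refl w⟩, rfl⟩
  refine ⟨v, hv, hv0, hvw, isCircuit_support hv hv0 fun u hu huv => ?_⟩
  by_contra! hnm
  obtain ⟨i, hi⟩ : ∃ i, u i ≠ 0 := by
    by_contra! h
    exact hnm 0 (by ext k; simp [h])
  -- rescale `u` so that it agrees in sign with `v` at `i`
  set u' := (u i * v i) • u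
  obtain ⟨t, ht, hsc, j, hvj, hj⟩ := exists_pos_signConsistent_sub_smul (u := u') (v := v)
    ((support_const_smul_subset _ u).trans huv) ⟨i, by
      simp only [u', Pi.smul_apply, smul_eq_mul]
      nlinarith [mul_self_pos.2 (mul_ne_zero hi (huv hi))]⟩
  refine hmin _ ⟨_, ⟨sub_mem hv (W.smul_mem t (W.smul_mem _ hu)), fun h => ?_, hvw.trans hsc⟩,
    rfl⟩ (hsc.support_subset.ssubset_of_ne fun h =>
      (show j ∈ support (v - t • u') by rw [h]; exact hvj) hj)
  set a := t * (u i * v i)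
  have ha : a ≠ 0 := mul_ne_zero ht.ne' (mul_ne_zero hi (huv hi))
  rw [sub_eq_zero, smul_smul] at h
  exact hnm a⁻¹ (by rw [h, smul_smul, inv_mul_cancel₀ ha, one_smul])

theorem exists_isConformalDecomposition {z : α → ℝ} (hz : z ∈ W) :
    ∃ (k : ℕ) (h : Fin k → α → ℝ), IsConformalDecomposition W z h := by
  induction hS : support z using WellFoundedLT.induction generalizing z with
  | ind S ih =>
  subst hS
  by_cases hz0 : z = 0
  · exact ⟨0, Fin.elim0, by simp [hz0], fun j => j.elim0, fun j => j.elim0, fun j => j.elim0,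
      fun j => j.elim0⟩
  obtain ⟨v, hv, hv0, hvz, hvC⟩ := exists_signConsistent_isCircuit hz hz0
  obtain ⟨i, hi⟩ := Function.ne_iff.1 hv0
  obtain ⟨t, ht, hsc, j, hzj, hj⟩ :=
    exists_pos_signConsistent_sub_smul hvz.support_subset
      ⟨i, by simpa [mul_comm] using hvz.mul_pos hi⟩
  obtain ⟨k, h, hd⟩ := ih _ (hsc.support_subset.ssubset_of_ne fun h =>
    (show j ∈ support (z - t • v) by rw [h]; exact hzj) hj) (sub_mem hz (W.smul_mem t hv)) rfl
  exact ⟨k + 1, _, hd.cons (W.smul_mem t hv) (smul_ne_zero ht.ne' hv0) (hvz.smul ht.le)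
    (by rwa [support_const_smul_of_ne_zero t v ht.ne']) hsc⟩

/-- All vectors supported on a circuit are proportional, so each circuit contributes a single
ratio to the supremum defining `kappa`. -/
theorem bddAbove_kappa (W : Submodule ℝ (α → ℝ)) :
    BddAbove ({1} ∪ {r | ∃ C : Set α, IsCircuit W C ∧ ∃ g ∈ W, g ≠ 0 ∧ {i | g i ≠ 0} = C ∧
      r = sSup ((fun i => |g i|) '' C) / sInf ((fun i => |g i|) '' C)}) := by
  refine ((Set.finite_singleton 1).union ((Set.finite_iUnion fun C : Set α =>
    Set.Subsingleton.finite (s := {r | IsCircuit W C ∧ ∃ g ∈ W, g ≠ 0 ∧ {i | g i ≠ 0} = C ∧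
      r = sSup ((fun i => |g i|) '' C) / sInf ((fun i => |g i|) '' C)}) ?_).subset ?_)).bddAbove
  · rintro _ ⟨hC, g, hg, hg0, rfl, rfl⟩ _ ⟨-, g', hg', hg'0, hg'C, rfl⟩
    obtain ⟨a, rfl⟩ := hC.eq_smul hg subset_rfl hg' hg'C.subset hg'0
    rw [← hg'C, sSup_div_sInf_image_abs_smul g' (left_ne_zero_of_smul hg0)]
  · rintro r ⟨C, hr⟩
    exact Set.mem_iUnion.2 ⟨C, hr⟩

theorem one_le_kappa : 1 ≤ kappa W :=
  le_csSup (bddAbove_kappa W) (Set.mem_union_left _ rfl)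

theorem kappa_nonneg : 0 ≤ kappa W :=
  zero_le_one.trans one_le_kappa

theorem abs_le_kappa_mul_abs {g : α → ℝ} (hg : g ∈ W) (hC : IsCircuit W (support g)) {l : α}
    (hl : g l ≠ 0) (i : α) : |g i| ≤ kappa W * |g l| := by
  by_cases hi : g i = 0
  · simpa [hi] using mul_nonneg kappa_nonneg (abs_nonneg (g l))
  set S := (fun i => |g i|) '' support g
  have hS : S.Finite := (Set.toFinite _).image _
  have hinf : 0 < sInf S := by
    obtain ⟨m, hm, hm'⟩ := (Set.Nonempty.image _ ⟨l, hl⟩ : S.Nonempty).csInf_mem hS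
    exact hm' ▸ abs_pos.2 hm
  have hratio : sSup S / sInf S ≤ kappa W :=
    le_csSup (bddAbove_kappa W) (Set.mem_union_right _ ⟨_, hC, g, hg, fun h => hl (by simp [h]),
      rfl, rfl⟩)
  calc |g i| ≤ sSup S := le_csSup hS.bddAbove ⟨i, hi, rfl⟩
    _ = sSup S / sInf S * sInf S := (div_mul_cancel₀ _ hinf.ne').symm
    _ ≤ kappa W * |g l| :=
      mul_le_mul hratio (csInf_le hS.bddBelow ⟨l, hl, rfl⟩) hinf.le kappa_nonneg

/-- Charge each `h j` to one of its nonzero entries in `L`. -/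
theorem sum_abs_le_kappa_mul_sum {β : Type*} {J : Finset β} {h : β → α → ℝ} (L : Finset α)
    (hW : ∀ j ∈ J, h j ∈ W) (hC : ∀ j ∈ J, IsCircuit W (support (h j)))
    (hL : ∀ j ∈ J, ∃ l ∈ L, h j l ≠ 0) (i : α) :
    ∑ j ∈ J, |h j i| ≤ kappa W * ∑ l ∈ L, ∑ j ∈ J, |h j l| := by
  rw [sum_comm, mul_sum]
  refine sum_le_sum fun j hj => ?_
  obtain ⟨l, hlL, hl⟩ := hL j hj
  calc |h j i| ≤ kappa W * |h j l| := abs_le_kappa_mul_abs (hW j hj) (hC j hj) hl i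
    _ ≤ kappa W * ∑ l ∈ L, |h j l| :=
      mul_le_mul_of_nonneg_left
        (single_le_sum (f := fun l => |h j l|) (fun _ _ => abs_nonneg _) hlL) kappa_nonneg

theorem IsConformalDecomposition.abs_le_kappa_mul_sum {z : α → ℝ} {k : ℕ} {h : Fin k → α → ℝ}
    (hd : IsConformalDecomposition W z h) (L : Finset α) (hL : ∀ j, ∃ l ∈ L, h j l ≠ 0)
    (i : α) : |z i| ≤ kappa W * ∑ l ∈ L, |z l| :=
  calc |z i| = |∑ j, h j i| := by rw [← hd.sum_eq, Finset.sum_apply]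
    _ ≤ ∑ j, |h j i| := abs_sum_le_sum_abs _ _
    _ ≤ kappa W * ∑ l ∈ L, ∑ j, |h j l| :=
      sum_abs_le_kappa_mul_sum L (fun j _ => hd.mem j) (fun j _ => hd.isCircuit j)
        (fun j _ => hL j) i
    _ ≤ kappa W * ∑ l ∈ L, |z l| :=
      mul_le_mul_of_nonneg_left (sum_le_sum fun l _ => hd.sum_abs_le univ l) kappa_nonneg

theorem exists_mem_of_mem_clos {K : Set α} {j : α} (hj : j ∈ clos W K) (hjK : j ∉ K) :
    ∃ g ∈ W, g j = 1 ∧ support g ⊆ insert j K ∧ ∀ l, |g l| ≤ kappa W := by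
  obtain ⟨-, C, hC, hjC, hCK⟩ := hj.resolve_left hjK
  obtain ⟨g, hg, rfl⟩ := hC.exists_support_eq
  have hgj : g j ≠ 0 := hjC
  refine ⟨(g j)⁻¹ • g, W.smul_mem _ hg, inv_mul_cancel₀ hgj, ?_, fun l => ?_⟩
  · rw [support_const_smul_of_ne_zero _ _ (inv_ne_zero hgj), Set.insert_eq, Set.union_comm]
    exact hCK
  · rw [Pi.smul_apply, smul_eq_mul, abs_mul, abs_inv, inv_mul_le_iff₀ (abs_pos.2 hgj), mul_comm]
    exact abs_le_kappa_mul_abs hg hC hgj l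

theorem exists_mem_eq_of_forall_mem_clos {K : Set α} {D : Finset α}
    (hD : ∀ i ∈ D, i ∈ clos W K ∧ i ∉ K) (x : α → ℝ) :
    ∃ w ∈ W, (∀ i ∈ D, w i = x i) ∧ (∀ l ∉ K, l ∉ D → w l = 0) ∧
      ∀ l, |w l| ≤ kappa W * ∑ i ∈ D, |x i| := by
  choose! g hgW hgi hgK hgκ using fun i (hi : i ∈ D) =>
    exists_mem_of_mem_clos (hD i hi).1 (hD i hi).2
  have hg0 {i l} (hi : i ∈ D) (hlK : l ∉ K) (hli : l ≠ i) : g i l = 0 :=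
    notMem_support.1 fun hl => (Set.mem_insert_iff.1 (hgK i hi hl)).elim hli hlK
  refine ⟨∑ i ∈ D, x i • g i, W.sum_mem fun i hi => W.smul_mem _ (hgW i hi), fun i hi => ?_,
    fun l hlK hlD => ?_, fun l => ?_⟩
  · rw [Finset.sum_apply, sum_eq_single_of_mem i hi fun j hj hji => ?_]
    · simp [hgi i hi]
    · simp [hg0 hj (hD i hi).2 (Ne.symm hji)]
  · rw [Finset.sum_apply]
    exact sum_eq_zero fun i hi => by simp [hg0 hi hlK (ne_of_mem_of_not_mem hi hlD).symm]
  · rw [Finset.sum_apply, mul_sum]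
    refine (abs_sum_le_sum_abs _ _).trans (sum_le_sum fun i hi => ?_)
    rw [Pi.smul_apply, smul_eq_mul, abs_mul, mul_comm]
    exact mul_le_mul_of_nonneg_right (hgκ i hi l) (abs_nonneg _)

def IsPrimalOptimal (W : Submodule ℝ (α → ℝ)) (d c x : α → ℝ) : Prop :=
  PrimalFeasible W d x ∧ ∀ y, PrimalFeasible W d y → c ⬝ᵥ x ≤ c ⬝ᵥ y

theorem norm1_nonneg (x : α → ℝ) : 0 ≤ norm1 x :=
  sum_nonneg fun i _ => abs_nonneg (x i)

theorem norm1_pos {x : α → ℝ} (hx : x ≠ 0) : 0 < norm1 x := by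
  obtain ⟨i, hi⟩ := Function.ne_iff.1 hx
  exact (abs_pos.2 hi).trans_le (single_le_sum (f := fun i => |x i|) (fun _ _ => abs_nonneg _)
    (mem_univ i))

theorem norm_le_norm1 (x : α → ℝ) : ‖x‖ ≤ norm1 x :=
  (pi_norm_le_iff_of_nonneg (norm1_nonneg x)).2 fun i =>
    single_le_sum (f := fun i => |x i|) (fun _ _ => abs_nonneg _) (mem_univ i)

theorem continuous_norm1_sub (a : α → ℝ) : Continuous fun x => norm1 (x - a) := by
  unfold norm1
  fun_prop

theorem exists_forall_norm1_sub_le {S : Set (α → ℝ)} (hS : IsClosed S) (hne : S.Nonempty)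
    (a : α → ℝ) : ∃ x ∈ S, ∀ y ∈ S, norm1 (x - a) ≤ norm1 (y - a) := by
  obtain ⟨x₀, hx₀⟩ := hne
  obtain ⟨x, hx, hmin⟩ := ((isCompact_closedBall a (norm1 (x₀ - a))).inter_left hS).exists_isMinOn
    ⟨x₀, hx₀, mem_closedBall_iff_norm.2 (norm_le_norm1 _)⟩ (continuous_norm1_sub a).continuousOn
  refine ⟨x, hx.1, fun y hy => ?_⟩
  by_cases hya : y ∈ Metric.closedBall a (norm1 (x₀ - a))
  · exact hmin ⟨hy, hya⟩
  · rw [mem_closedBall_iff_norm, not_le] at hya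
    exact (hmin ⟨hx₀, mem_closedBall_iff_norm.2 (norm_le_norm1 _)⟩).trans
      (hya.le.trans (norm_le_norm1 _))

theorem dotProduct_eq_of_sub_mem_orthComp {c s h : α → ℝ}
    (hsc : s - c ∈ orthComp W) (hh : h ∈ W) : c ⬝ᵥ h = s ⬝ᵥ h := by
  have : h ⬝ᵥ (s - c) = 0 := hsc h hh
  rw [dotProduct_sub, sub_eq_zero, dotProduct_comm h, dotProduct_comm h] at this
  exact this.symm

theorem exists_pos_and_neg_of_dotProduct_neg {s h : α → ℝ} (hs : ∀ i, 0 ≤ s i)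
    (hsh : s ⬝ᵥ h < 0) : ∃ l, 0 < s l ∧ h l < 0 := by
  by_contra! H
  refine hsh.not_ge (sum_nonneg fun l _ => ?_)
  rcases (hs l).eq_or_lt with hl | hl
  · simp [← hl]
  · exact mul_nonneg hl.le (H l hl)

theorem isClosed_setOf_primalFeasible (W : Submodule ℝ (α → ℝ)) (d : α → ℝ) :
    IsClosed {x | PrimalFeasible W d x} := by
  have : {x | PrimalFeasible W d x} = (· - d) ⁻¹' W ∩ ⋂ i, {x | 0 ≤ x i} := by
    ext
    simp [PrimalFeasible]
  rw [this]
  exact (W.closed_of_finiteDimensional.preimage (continuous_id.sub continuous_const)).inter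
    (isClosed_iInter fun i => isClosed_le continuous_const (continuous_apply i))

theorem IsPrimalOptimal.of_le {d c x y : α → ℝ} (hx : IsPrimalOptimal W d c x)
    (hy : PrimalFeasible W d y) (hle : c ⬝ᵥ y ≤ c ⬝ᵥ x) : IsPrimalOptimal W d c y :=
  ⟨hy, fun z hz => hle.trans (hx.2 z hz)⟩

theorem IsOptimalPair.mul_eq_zero {d c x s : α → ℝ} (h : IsOptimalPair W d c x s) (i : α) :
    x i * s i = 0 :=
  (sum_eq_zero_iff_of_nonneg fun j _ => mul_nonneg (h.1.2 j) (h.2.1.2 j)).1 h.2.2 i (mem_univ i)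

/-- Keep the circuit vectors of a conformal decomposition of `y - x₀` that decrease the cost:
each is negative somewhere, hence decreases a coordinate of `x₀`, so `x₀` pays for the charge. -/
theorem PrimalFeasible.exists_near_dotProduct_le {d c s x₀ y : α → ℝ}
    (hx₀ : PrimalFeasible W d x₀) (hy : PrimalFeasible W d y) (hsc : s - c ∈ orthComp W)
    (hs : ∀ i, 0 ≤ s i) :
    ∃ y', PrimalFeasible W d y' ∧ c ⬝ᵥ y' ≤ c ⬝ᵥ y ∧ ∀ i, |y' i - x₀ i| ≤ kappa W * norm1 x₀ := by
  classical
  obtain ⟨k, h, hd⟩ := exists_isConformalDecomposition (hy.sub_mem hx₀)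
  set J := univ.filter fun j => s ⬝ᵥ h j < 0
  have hy' : x₀ + ∑ j ∈ J, h j + ∑ j ∈ Jᶜ, h j = y := by
    rw [add_assoc, sum_add_sum_compl, hd.sum_eq, add_sub_cancel]
  refine ⟨x₀ + ∑ j ∈ J, h j, ⟨?_, fun l => ?_⟩, ?_, fun i => ?_⟩
  · rw [add_sub_right_comm]
    exact W.add_mem hx₀.1 (W.sum_mem fun j _ => hd.mem j)
  · have hl := congrFun hy' l
    simp only [Pi.add_apply, Finset.sum_apply] at hl ⊢
    rcases le_total 0 ((y - x₀) l) with hz | hz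
    · linarith [hx₀.2 l, sum_nonneg fun j (_ : j ∈ J) => (hd.signConsistent j).nonneg hz]
    · linarith [hy.2 l, sum_nonpos fun j (_ : j ∈ Jᶜ) => (hd.signConsistent j).nonpos hz]
  · rw [← hy', dotProduct_add _ (x₀ + _), le_add_iff_nonneg_right, dotProduct_sum]
    refine sum_nonneg fun j hj => ?_
    rw [dotProduct_eq_of_sub_mem_orthComp hsc (hd.mem j)]
    simpa [J] using hj
  set L := univ.filter fun l => y l < x₀ l
  have hL : ∀ j ∈ J, ∃ l ∈ L, h j l ≠ 0 := fun j hj => by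
    obtain ⟨l, -, hl⟩ := exists_pos_and_neg_of_dotProduct_neg hs (by simpa [J] using hj)
    refine ⟨l, ?_, hl.ne⟩
    have : (y - x₀) l < 0 := lt_of_not_ge fun hz => hl.not_ge ((hd.signConsistent j).nonneg hz)
    simpa [L] using this
  calc |(x₀ + ∑ j ∈ J, h j) i - x₀ i| = |∑ j ∈ J, h j i| := by simp [Finset.sum_apply]
    _ ≤ ∑ j ∈ J, |h j i| := abs_sum_le_sum_abs _ _
    _ ≤ kappa W * ∑ l ∈ L, ∑ j ∈ J, |h j l| :=
      sum_abs_le_kappa_mul_sum L (fun j _ => hd.mem j) (fun j _ => hd.isCircuit j) hL i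
    _ ≤ kappa W * ∑ l ∈ L, |x₀ l| := by
      refine mul_le_mul_of_nonneg_left (sum_le_sum fun l hl => ?_) kappa_nonneg
      have := hd.sum_abs_le J l
      simp only [L, mem_filter, mem_univ, true_and] at hl
      rw [Pi.sub_apply, abs_of_neg (sub_neg.2 hl)] at this
      linarith [hy.2 l, le_abs_self (x₀ l)]
    _ ≤ kappa W * norm1 x₀ := mul_le_mul_of_nonneg_left
      (sum_le_sum_of_subset_of_nonneg (subset_univ L) fun _ _ _ => abs_nonneg _) kappa_nonneg

theorem exists_isPrimalOptimal {d c s : α → ℝ} (hsc : s - c ∈ orthComp W) (hs : ∀ i, 0 ≤ s i)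
    (hfeas : ∃ x, PrimalFeasible W d x) : ∃ x, IsPrimalOptimal W d c x := by
  obtain ⟨x₀, hx₀⟩ := hfeas
  set r := kappa W * norm1 x₀
  obtain ⟨x, hx, hmin⟩ := ((isCompact_closedBall x₀ r).inter_left
    (isClosed_setOf_primalFeasible W d)).exists_isMinOn
      ⟨x₀, hx₀, Metric.mem_closedBall_self (mul_nonneg kappa_nonneg (norm1_nonneg x₀))⟩
      (continuous_const.dotProduct continuous_id).continuousOn
  refine ⟨x, hx.1, fun y hy => ?_⟩
  obtain ⟨y', hy', hle, hnear⟩ := hx₀.exists_near_dotProduct_le hy hsc hs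
  exact (hmin ⟨hy', mem_closedBall_iff_norm.2
    ((pi_norm_le_iff_of_nonneg (mul_nonneg kappa_nonneg (norm1_nonneg x₀))).2 hnear)⟩).trans hle

theorem exists_pos_le_one_nonneg_sub_smul {x h : α → ℝ} (hx : ∀ l, 0 ≤ x l)
    (hpos : ∀ l, 0 < h l → 0 < x l) : ∃ t : ℝ, 0 < t ∧ t ≤ 1 ∧ ∀ l, 0 ≤ (x - t • h) l := by
  have hev : ∀ l, ∀ᶠ t in 𝓝[>] (0 : ℝ), 0 ≤ x l - t * h l := fun l => by
    rcases le_or_gt (h l) 0 with hl | hl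
    · filter_upwards [self_mem_nhdsWithin] with t (ht : 0 < t)
      nlinarith [hx l]
    · have : ContinuousAt (fun t : ℝ => x l - t * h l) 0 := by fun_prop
      filter_upwards [nhdsWithin_le_nhds (continuousAt_const.eventually_lt this
        (by simpa using hpos l hl))] with t ht
      exact ht.le
  obtain ⟨t, ⟨hnn, ht1⟩, ht0⟩ := ((eventually_all.2 hev).and (Ioc_mem_nhdsGT one_pos)).and
    self_mem_nhdsWithin |>.exists
  exact ⟨t, ht0, ht1.2, hnn⟩

/-- Otherwise a small step `x - t • h` would stay optimal and get closer to `a`. -/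
theorem IsPrimalOptimal.exists_eq_zero_and_pos {d c s a x h : α → ℝ}
    (hx : IsPrimalOptimal W d c x)
    (hmin : ∀ y, IsPrimalOptimal W d c y → norm1 (x - a) ≤ norm1 (y - a))
    (hsc : s - c ∈ orthComp W) (hh : h ∈ W) (hh0 : h ≠ 0) (hhx : SignConsistent h (x - a))
    (habs : ∀ l, |h l| ≤ |(x - a) l|) (hsh : 0 ≤ s ⬝ᵥ h) : ∃ l, x l = 0 ∧ 0 < h l := by
  by_contra! hpos
  obtain ⟨t, ht0, ht1, hnn⟩ := exists_pos_le_one_nonneg_sub_smul hx.1.2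
    fun l hl => (hx.1.2 l).lt_of_ne' fun h0 => (hpos l h0).not_gt hl
  have hy : IsPrimalOptimal W d c (x - t • h) := by
    refine hx.of_le ⟨?_, hnn⟩ ?_
    · rw [sub_right_comm]
      exact W.sub_mem hx.1.1 (W.smul_mem t hh)
    · rw [dotProduct_sub, dotProduct_smul, dotProduct_eq_of_sub_mem_orthComp hsc hh, smul_eq_mul]
      nlinarith
  have hdec : norm1 (x - t • h - a) ≤ norm1 (x - a) - t * norm1 h := by
    unfold norm1
    rw [mul_sum, ← sum_sub_distrib]
    refine sum_le_sum fun l _ => ?_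
    simpa [sub_right_comm] using abs_sub_mul_le (hhx.1 l) (habs l) ht0.le ht1
  nlinarith [hmin _ hy, norm1_pos hh0]

theorem IsOptimalPair.exists_ne_zero_abs_le {d dt c xt s x p h : α → ℝ}
    (hopt : IsOptimalPair W dt c xt s) (hx : IsPrimalOptimal W d c x)
    (hmin : ∀ y, IsPrimalOptimal W d c y → norm1 (x - (xt + p)) ≤ norm1 (y - (xt + p)))
    (hh : h ∈ W) (hh0 : h ≠ 0) (hhz : SignConsistent h (x - (xt + p)))
    (habs : ∀ l, |h l| ≤ |(x - (xt + p)) l|) :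
    ∃ l, h l ≠ 0 ∧ |(x - (xt + p)) l| ≤ |p l| := by
  have hz l : (x - (xt + p)) l = x l - xt l - p l := by simp only [Pi.sub_apply, Pi.add_apply]; ring
  rcases lt_or_ge (s ⬝ᵥ h) 0 with hneg | hnn
  · obtain ⟨l, hsl, hl⟩ := exists_pos_and_neg_of_dotProduct_neg hopt.2.1.2 hneg
    have hxt : xt l = 0 := (mul_eq_zero_iff_right hsl.ne').1 (hopt.mul_eq_zero l)
    have hzl : (x - (xt + p)) l < 0 := lt_of_not_ge fun hz => hl.not_ge (hhz.nonneg hz)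
    refine ⟨l, hl.ne, ?_⟩
    rw [abs_of_neg hzl, hz] at *
    linarith [hx.1.2 l, le_abs_self (p l)]
  · obtain ⟨l, hxl, hl⟩ := hx.exists_eq_zero_and_pos hmin hopt.2.1.1 hh hh0 hhz habs hnn
    have hzl : 0 < (x - (xt + p)) l := lt_of_not_ge fun hz => hl.not_ge (hhz.nonpos hz)
    refine ⟨l, hl.ne', ?_⟩
    rw [abs_of_pos hzl, hz] at *
    linarith [hopt.1.2 l, neg_abs_le (p l)]

theorem IsOptimalPair.exists_isPrimalOptimal_near {d dt c xt s : α → ℝ}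
    (hopt : IsOptimalPair W dt c xt s) (hfeas : ∃ x, PrimalFeasible W d x) :
    ∃ x, IsPrimalOptimal W d c x ∧ ∀ i, |x i - xt i| ≤ (kappa W + 1) * norm1 (d - dt) := by
  classical
  set p := d - dt
  obtain ⟨x₁, hx₁⟩ := exists_isPrimalOptimal hopt.2.1.1 hopt.2.1.2 hfeas
  have hclosed : IsClosed {x | IsPrimalOptimal W d c x} := by
    have : {x | IsPrimalOptimal W d c x} = {x | PrimalFeasible W d x} ∩ {x | c ⬝ᵥ x ≤ c ⬝ᵥ x₁} :=
      Set.ext fun x => ⟨fun h => ⟨h.1, h.2 x₁ hx₁.1⟩, fun h => hx₁.of_le h.1 h.2⟩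
    rw [this]
    exact (isClosed_setOf_primalFeasible W d).inter
      (isClosed_le (continuous_const.dotProduct continuous_id) continuous_const)
  obtain ⟨x, hx, hmin⟩ := exists_forall_norm1_sub_le hclosed ⟨x₁, hx₁⟩ (xt + p)
  have hzW : x - (xt + p) ∈ W := by
    have : x - (xt + p) = (x - d) - (xt - dt) := by simp only [p]; abel
    exact this ▸ W.sub_mem hx.1.1 hopt.1.1
  obtain ⟨k, h, hd⟩ := exists_isConformalDecomposition hzW
  set L := univ.filter fun l => |(x - (xt + p)) l| ≤ |p l|
  have hL j : ∃ l ∈ L, h j l ≠ 0 := by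
    obtain ⟨l, hl, hlp⟩ := hopt.exists_ne_zero_abs_le hx hmin (hd.mem j) (hd.ne_zero j)
      (hd.signConsistent j) fun l => by simpa using hd.sum_abs_le {j} l
    exact ⟨l, by simpa [L] using hlp, hl⟩
  refine ⟨x, hx, fun i => ?_⟩
  have hLp : ∑ l ∈ L, |(x - (xt + p)) l| ≤ norm1 p :=
    (sum_le_sum fun l hl => (mem_filter.1 hl).2).trans
      (sum_le_sum_of_subset_of_nonneg (subset_univ L) fun _ _ _ => abs_nonneg _)
  calc |x i - xt i| = |(x - (xt + p)) i + p i| := by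
        congr 1
        simp only [Pi.sub_apply, Pi.add_apply]
        ring
    _ ≤ |(x - (xt + p)) i| + |p i| := abs_add_le _ _
    _ ≤ kappa W * ∑ l ∈ L, |(x - (xt + p)) l| + norm1 p :=
      add_le_add (hd.abs_le_kappa_mul_sum L hL i)
        (single_le_sum (f := fun l => |p l|) (fun _ _ => abs_nonneg _) (mem_univ i))
    _ ≤ (kappa W + 1) * norm1 (d - dt) := by nlinarith [kappa_nonneg (W := W)]

theorem IsPrimalOptimal.exists_eq_zero_of_forall_mem_clos {d c s x : α → ℝ} {K : Set α}
    {D : Finset α} (hx : IsPrimalOptimal W d c x) (hsc : s - c ∈ orthComp W) (hs : ∀ i, 0 ≤ s i)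
    (hsK : ∀ l ∈ K, s l = 0) (hD : ∀ i ∈ D, i ∈ clos W K ∧ i ∉ K)
    (hK : ∀ l ∈ K, kappa W * ∑ i ∈ D, x i < x l) :
    ∃ x', IsPrimalOptimal W d c x' ∧ (∀ i ∈ D, x' i = 0) ∧ (∀ l ∉ K, l ∉ D → x' l = x l) ∧
      ∀ l ∈ K, 0 < x' l := by
  obtain ⟨w, hw, hwD, hw0, hwκ⟩ := exists_mem_eq_of_forall_mem_clos hD x
  simp only [abs_of_nonneg (hx.1.2 _)] at hwκ
  have hD0 i (hi : i ∈ D) : (x - w) i = 0 := by simp [hwD i hi]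
  have hoff l (hlK : l ∉ K) (hlD : l ∉ D) : (x - w) l = x l := by simp [hw0 l hlK hlD]
  have hpos l (hl : l ∈ K) : 0 < (x - w) l := by
    linarith [Pi.sub_apply x w l, hK l hl, le_abs_self (w l), hwκ l]
  have hsw : 0 ≤ s ⬝ᵥ w := sum_nonneg fun l _ => by
    by_cases hlK : l ∈ K
    · simp [hsK l hlK]
    by_cases hlD : l ∈ D
    · simpa [hwD l hlD] using mul_nonneg (hs l) (hx.1.2 l)
    · simp [hw0 l hlK hlD]
  refine ⟨x - w, hx.of_le ⟨?_, fun l => ?_⟩ ?_, hD0, hoff, hpos⟩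
  · rw [sub_right_comm]
    exact W.sub_mem hx.1.1 hw
  · by_cases hlK : l ∈ K
    · exact (hpos l hlK).le
    by_cases hlD : l ∈ D
    · exact (hD0 l hlD).ge
    · exact (hoff l hlK hlD).symm ▸ hx.1.2 l
  · rw [dotProduct_sub, dotProduct_eq_of_sub_mem_orthComp hsc hw]
    linarith

end

/-- there is a primal optimal solution positive on the large and
medium coordinates `I_L ∪ I_M` and vanishing on `I_S⁰ = I_S ∩ cl(I_L)`. -/
theorem primal_optimal_support_fixing {n : ℕ} (W : Submodule ℝ (Fin n → ℝ))
    (c d dt xt s : Fin n → ℝ) (tau T : ℝ)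
    (hopt : IsOptimalPair W dt c xt s)
    (hfeas : ∃ x : Fin n → ℝ, x - d ∈ W ∧ ∀ i, 0 ≤ x i)
    (htau : (kappa W + 1) * norm1 (d - dt) ≤ tau)
    (hT : (2 * n * kappa W + 1) * tau ≤ T) :
    ∃ x'' : Fin n → ℝ,
      (x'' - d ∈ W ∧ (∀ i, 0 ≤ x'' i) ∧
        ∀ x' : Fin n → ℝ, x' - d ∈ W → (∀ i, 0 ≤ x' i) →
          ∑ i, c i * x'' i ≤ ∑ i, c i * x' i) ∧
      (∀ i, tau < xt i → 0 < x'' i) ∧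
      (∀ i, xt i ≤ tau → i ∈ clos W {j | T < xt j} → x'' i = 0) := by
  classical
  obtain ⟨x, hx, hnear⟩ := hopt.exists_isPrimalOptimal_near hfeas
  have hnear' i : |x i - xt i| ≤ tau := (hnear i).trans htau
  have htau0 : 0 ≤ tau :=
    (mul_nonneg (by linarith [one_le_kappa (W := W)]) (norm1_nonneg _)).trans htau
  have hnκτ : 0 ≤ 2 * n * kappa W * tau := by have := kappa_nonneg (W := W); positivity
  set K := {j | T < xt j}
  set D := Finset.univ.filter fun i => xt i ≤ tau ∧ i ∈ clos W K
  have hD i (hi : i ∈ D) : xt i ≤ tau ∧ i ∈ clos W K := by simpa [D] using hi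
  have hsum : ∑ i ∈ D, x i ≤ n * (2 * tau) := by
    refine (Finset.sum_le_card_nsmul D x (2 * tau) fun i hi => ?_).trans ?_
    · linarith [(abs_le.1 (hnear' i)).2, (hD i hi).1]
    · rw [nsmul_eq_mul]
      gcongr
      exact_mod_cast (Finset.card_le_univ D).trans (by simp)
  obtain ⟨x'', hx'', hD0, hoff, hKpos⟩ := hx.exists_eq_zero_of_forall_mem_clos hopt.2.1.1
    hopt.2.1.2
    (fun l (hl : T < xt l) => (mul_eq_zero_iff_left (by linarith)).1 (hopt.mul_eq_zero l))
    (fun i hi => ⟨(hD i hi).2, fun (h : T < xt i) => by linarith [(hD i hi).1]⟩)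
    (fun l (hl : T < xt l) => by nlinarith [(abs_le.1 (hnear' l)).1, kappa_nonneg (W := W)])
  refine ⟨x'', ⟨hx''.1.1, hx''.1.2, fun y hy hy0 => hx''.2 y ⟨hy, hy0⟩⟩, fun i hi => ?_,
    fun i h1 h2 => hD0 i (by simp [D, h1, h2])⟩
  by_cases hiK : i ∈ K
  · exact hKpos i hiK
  · rw [hoff i hiK (by simp [D]; intro; linarith)]
    linarith [(abs_le.1 (hnear' i)).1]
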